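/- Let n, s ≥ 0 and r ≥ 1 be integers and 0 ≤ j ≤ r−1. Under the exactness assumption, the boundary weight attached to the j-th derivative at a satisfies λ_0^{(j)} = ∫ P_{n,r,s,a,j}(t) dλ(t). -/

import Mathlib

/-!
The polynomial `P_j = (t-a)^j/j! · Ω_{r-j-1} ω` has degree at most `2n+r+s-1`, so the quadrature is
exact on it. Since `Ω_{r-j-1}` is the Taylor polynomial of `1/ω` at `a`, the Leibniz rule gives
`Ω_{r-j-1} ω ≡ 1` modulo `(t-a)^{r-j}`, hence `P_j ≡ (t-a)^j/j!` modulo `(t-a)^r`: the derivatives of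
`P_j` at `a` of order `< r` are `δ_{ij}`. Moreover `ω`, hence `P_j`, vanishes at every node and is
divisible by `(b-t)^s`. So the quadrature applied to `P_j` returns exactly `λ₀^{(j)}`.
-/

open MeasureTheory

/-- The generalized Gauss–Radau/Gauss–Lobatto quadrature
`Q_{n,r,s}(f) = Σ_{j<r} λ₀^{(j)} f^{(j)}(a) + Σ_{j<n} λ_j f(τ_j) + Σ_{j<s} (-1)^j λ_{n+1}^{(j)} f^{(j)}(b)`,
where derivatives are taken within `[a,b]`. -/
noncomputable def quad (a b : ℝ) (n r s : ℕ) (τ w0 wi w1 : ℕ → ℝ) (f : ℝ → ℝ) : ℝ :=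
  (∑ j ∈ Finset.range r, w0 j * iteratedDerivWithin j f (Set.Icc a b) a)
  + (∑ j ∈ Finset.range n, wi j * f (τ j))
  + (∑ j ∈ Finset.range s, (-1 : ℝ) ^ j * w1 j * iteratedDerivWithin j f (Set.Icc a b) b)

/-- `ω(t) = (b-t)^s ∏_{k=1}^n (τ_k - t)^2`. -/
noncomputable def omegaFun (b : ℝ) (n s : ℕ) (τ : ℕ → ℝ) (t : ℝ) : ℝ :=
  (b - t) ^ s * ∏ k ∈ Finset.range n, (τ k - t) ^ 2

/-- `Ω_m(t)`, the `m`-th partial sum of the Taylor expansion of `1/ω` at `t = a`. -/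
noncomputable def OmegaFun (a b : ℝ) (n s : ℕ) (τ : ℕ → ℝ) (m : ℕ) (t : ℝ) : ℝ :=
  ∑ ℓ ∈ Finset.range (m + 1),
    (t - a) ^ ℓ * iteratedDeriv ℓ (fun u => (omegaFun b n s τ u)⁻¹) a / (ℓ.factorial : ℝ)

/-- `P_{n,r,s,a,j}(t) = ((t-a)^j / j!) Ω_{r-j-1}(t) ω(t)`. -/
noncomputable def PaFun (a b : ℝ) (n r s : ℕ) (τ : ℕ → ℝ) (j : ℕ) (t : ℝ) : ℝ :=
  ((t - a) ^ j / (j.factorial : ℝ)) * OmegaFun a b n s τ (r - j - 1) t * omegaFun b n s τ t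

open Polynomial

namespace Polynomial

section Algebraic

variable {R : Type*} [CommRing R]

theorem eval_iterate_derivative_eq_zero_of_pow_dvd {p : R[X]} {x : R} {m i : ℕ}
    (h : (X - C x) ^ m ∣ p) (hi : i < m) : (derivative^[i] p).eval x = 0 :=
  dvd_iff_isRoot.mp <| (dvd_pow_self _ (Nat.sub_ne_zero_of_lt hi)).trans
    (pow_sub_dvd_iterate_derivative_of_pow_dvd i h)

theorem pow_dvd_of_eval_iterate_derivative_eq_zero [IsDomain R] [CharZero R] {p : R[X]} {x : R}
    {m : ℕ} (h : ∀ i < m, (derivative^[i] p).eval x = 0) : (X - C x) ^ m ∣ p := by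
  rcases eq_or_ne p 0 with rfl | hp
  · exact dvd_zero _
  rw [← le_rootMultiplicity_iff hp]
  cases m with
  | zero => exact Nat.zero_le _
  | succ m => exact lt_rootMultiplicity_of_isRoot_iterate_derivative hp fun i hi => h i (by omega)

theorem eval_self_iterate_derivative_X_sub_C_pow (x : R) (i j : ℕ) :
    (derivative^[i] ((X - C x) ^ j)).eval x = if i = j then (j.factorial : R) else 0 := by
  rw [iterate_derivative_X_sub_pow, eval_smul, eval_pow, eval_sub, eval_X, eval_C, sub_self]
  rcases lt_trichotomy i j with h | rfl | h
  · simp [h.ne, zero_pow (Nat.sub_ne_zero_of_lt h)]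
  · simp [Nat.descFactorial_self]
  · simp [h.ne', Nat.descFactorial_eq_zero_iff_lt.mpr h]

end Algebraic

variable {𝕜 : Type*} [NontriviallyNormedField 𝕜]

theorem contDiff_eval (p : 𝕜[X]) (n : WithTop ℕ∞) : ContDiff 𝕜 n fun x => p.eval x := by
  simpa using p.contDiff_aeval (𝕜 := 𝕜) n

theorem iteratedDeriv_eval (p : 𝕜[X]) (k : ℕ) :
    iteratedDeriv k (fun x => p.eval x) = fun x => (derivative^[k] p).eval x := by
  induction k generalizing p with
  | zero => simp
  | succ k ih =>
    have hderiv : _root_.deriv (fun x => p.eval x) = fun x => p.derivative.eval x := by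
      ext x; exact p.deriv
    rw [iteratedDeriv_succ', hderiv, ih, Function.iterate_succ_apply]

theorem iteratedDerivWithin_eval (p : 𝕜[X]) {s : Set 𝕜} (hs : UniqueDiffOn 𝕜 s) {x : 𝕜}
    (hx : x ∈ s) (k : ℕ) :
    iteratedDerivWithin k (fun x => p.eval x) s x = (derivative^[k] p).eval x := by
  rw [iteratedDerivWithin_eq_iteratedDeriv hs (p.contDiff_eval k).contDiffAt hx,
    iteratedDeriv_eval]

end Polynomial

variable {𝕜 : Type*} [NontriviallyNormedField 𝕜]

theorem iteratedDeriv_mul_congr_left {𝔸 : Type*} [NormedRing 𝔸] [NormedAlgebra 𝕜 𝔸]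
    {f₁ f₂ g : 𝕜 → 𝔸} {x : 𝕜} {m : ℕ} (hf₁ : ContDiffAt 𝕜 m f₁ x) (hf₂ : ContDiffAt 𝕜 m f₂ x)
    (hg : ContDiffAt 𝕜 m g x) (h : ∀ k ≤ m, iteratedDeriv k f₁ x = iteratedDeriv k f₂ x) :
    iteratedDeriv m (f₁ * g) x = iteratedDeriv m (f₂ * g) x := by
  rw [iteratedDeriv_mul hf₁ hg, iteratedDeriv_mul hf₂ hg]
  exact Finset.sum_congr rfl fun k hk => by
    rw [h k (Nat.lt_succ_iff.mp (Finset.mem_range.mp hk))]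

-- An honest polynomial, unlike Mathlib's `taylorWithin` (a `PolynomialModule` element).
noncomputable def taylorPoly (f : 𝕜 → 𝕜) (a : 𝕜) (m : ℕ) : 𝕜[X] :=
  ∑ ℓ ∈ Finset.range (m + 1), C (iteratedDeriv ℓ f a / ℓ.factorial) * (X - C a) ^ ℓ

theorem taylorPoly_eval (f : 𝕜 → 𝕜) (a : 𝕜) (m : ℕ) (t : 𝕜) :
    (taylorPoly f a m).eval t =
      ∑ ℓ ∈ Finset.range (m + 1), (t - a) ^ ℓ * iteratedDeriv ℓ f a / ℓ.factorial := by
  simp only [taylorPoly, eval_finsetSum, eval_mul, eval_C, eval_pow, eval_sub, eval_X]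
  exact Finset.sum_congr rfl fun _ _ => by ring

theorem natDegree_taylorPoly_le (f : 𝕜 → 𝕜) (a : 𝕜) (m : ℕ) :
    (taylorPoly f a m).natDegree ≤ m :=
  natDegree_sum_le_of_forall_le _ _ fun ℓ hℓ =>
    (natDegree_C_mul_le _ _).trans <| (natDegree_pow_le_of_le ℓ (natDegree_X_sub_C_le a)).trans <|
      (mul_one ℓ).trans_le (Nat.lt_succ_iff.mp (Finset.mem_range.mp hℓ))

theorem eval_iterate_derivative_taylorPoly [CharZero 𝕜] (f : 𝕜 → 𝕜) (a : 𝕜) {m k : ℕ}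
    (hk : k ≤ m) : (derivative^[k] (taylorPoly f a m)).eval a = iteratedDeriv k f a := by
  simp only [taylorPoly, iterate_derivative_sum, iterate_derivative_C_mul, eval_finsetSum,
    eval_mul, eval_C, eval_self_iterate_derivative_X_sub_C_pow, mul_ite, mul_zero]
  rw [Finset.sum_ite_eq, if_pos (Finset.mem_range.mpr (Nat.lt_succ_of_le hk))]
  exact div_mul_cancel₀ _ (Nat.cast_ne_zero.mpr k.factorial_ne_zero)

/-- By the Leibniz rule, the derivatives of order `≤ m` at `a` of `taylorPoly w⁻¹ a m * w` only
see those of `taylorPoly w⁻¹ a m`, which are those of `w⁻¹`; and `w⁻¹ * w = 1` near `a`. -/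
theorem eval_iterate_derivative_taylorPoly_inv_mul [CharZero 𝕜] (w : 𝕜[X]) {a : 𝕜}
    (ha : w.eval a ≠ 0) {m k : ℕ} (hk : k ≤ m) :
    (derivative^[k] (taylorPoly (fun t => (w.eval t)⁻¹) a m * w)).eval a =
      if k = 0 then 1 else 0 := by
  set O := taylorPoly (fun t => (w.eval t)⁻¹) a m
  have hinv : ContDiffAt 𝕜 k (fun t => (w.eval t)⁻¹) a := (w.contDiff_eval k).contDiffAt.inv ha
  have hone : ((fun t => (w.eval t)⁻¹) * fun t => w.eval t) =ᶠ[nhds a] fun _ => 1 := by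
    filter_upwards [(w.contDiff_eval 0).continuous.continuousAt.eventually_ne ha] with t ht
    exact inv_mul_cancel₀ ht
  calc (derivative^[k] (O * w)).eval a
      = iteratedDeriv k ((fun t => O.eval t) * fun t => w.eval t) a := by
        rw [← funext_iff.mp (iteratedDeriv_eval (O * w) k)]; simp only [eval_mul]; rfl
    _ = iteratedDeriv k ((fun t => (w.eval t)⁻¹) * fun t => w.eval t) a := by
        refine iteratedDeriv_mul_congr_left (O.contDiff_eval k).contDiffAt hinv
          (w.contDiff_eval k).contDiffAt fun i hi => ?_
        exact (congrFun (iteratedDeriv_eval O i) a).trans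
          (eval_iterate_derivative_taylorPoly _ _ (hi.trans hk))
    _ = if k = 0 then 1 else 0 := by rw [hone.iteratedDeriv_eq, iteratedDeriv_const]

theorem X_sub_C_pow_dvd_taylorPoly_inv_mul_sub_one [CharZero 𝕜] (w : 𝕜[X]) {a : 𝕜}
    (ha : w.eval a ≠ 0) (m : ℕ) :
    (X - C a) ^ (m + 1) ∣ taylorPoly (fun t => (w.eval t)⁻¹) a m * w - 1 := by
  refine pow_dvd_of_eval_iterate_derivative_eq_zero fun k hk => ?_
  rw [iterate_derivative_sub, eval_sub,
    eval_iterate_derivative_taylorPoly_inv_mul w ha (Nat.lt_succ_iff.mp hk)]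
  rcases k.eq_zero_or_pos with rfl | hk₀
  · simp
  · simp [hk₀.ne', iterate_derivative_one hk₀]

section GaussRadauLobatto

variable (a b : ℝ) (n r s : ℕ) (τ : ℕ → ℝ)

noncomputable def omegaPoly : ℝ[X] :=
  (C b - X) ^ s * ∏ k ∈ Finset.range n, (C (τ k) - X) ^ 2

noncomputable def leftWeightPoly (j : ℕ) : ℝ[X] :=
  C (j.factorial : ℝ)⁻¹ * (X - C a) ^ j *
    (taylorPoly (fun t => ((omegaPoly b n s τ).eval t)⁻¹) a (r - j - 1) * omegaPoly b n s τ)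

variable {a b n r s τ}

theorem omegaPoly_eval (t : ℝ) : (omegaPoly b n s τ).eval t = omegaFun b n s τ t := by
  simp [omegaPoly, omegaFun, eval_prod]

theorem natDegree_omegaPoly_le : (omegaPoly b n s τ).natDegree ≤ s + 2 * n := by
  have hlin : ∀ c : ℝ, (C c - X).natDegree ≤ 1 := fun c =>
    (natDegree_sub_le _ _).trans (by simp)
  have hprod : (∏ k ∈ Finset.range n, (C (τ k) - X) ^ 2).natDegree ≤ 2 * n :=
    (natDegree_prod_le _ _).trans <| (Finset.sum_le_card_nsmul _ _ 2 fun k _ =>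
      (natDegree_pow_le_of_le 2 (hlin (τ k))).trans_eq (mul_one 2)).trans_eq (by simp [mul_comm])
  exact natDegree_mul_le_of_le ((natDegree_pow_le_of_le s (hlin b)).trans_eq (mul_one s)) hprod

theorem X_sub_C_pow_dvd_omegaPoly : (X - C b) ^ s ∣ omegaPoly b n s τ :=
  (pow_dvd_pow_of_dvd (dvd_sub_comm.mp dvd_rfl) s).mul_right _

theorem omegaPoly_eval_node {k : ℕ} (hk : k < n) : (omegaPoly b n s τ).eval (τ k) = 0 := by
  rw [omegaPoly_eval, omegaFun, Finset.prod_eq_zero (Finset.mem_range.mpr hk) (by ring),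
    mul_zero]

theorem omegaPoly_eval_pos (hab : a < b) (hτ : ∀ k < n, τ k ∈ Set.Ioo a b) :
    0 < (omegaPoly b n s τ).eval a := by
  rw [omegaPoly_eval]
  exact mul_pos (pow_pos (sub_pos.mpr hab) s) <| Finset.prod_pos fun k hk =>
    pow_pos (sub_pos.mpr (hτ k (Finset.mem_range.mp hk)).1) 2

theorem leftWeightPoly_eval (j : ℕ) (t : ℝ) :
    (leftWeightPoly a b n r s τ j).eval t = PaFun a b n r s τ j t := by
  simp only [leftWeightPoly, PaFun, OmegaFun, eval_mul, eval_C, eval_pow, eval_sub, eval_X,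
    taylorPoly_eval, omegaPoly_eval]
  ring

theorem natDegree_leftWeightPoly_lt {j : ℕ} (hj : j < r) :
    (leftWeightPoly a b n r s τ j).natDegree < 2 * n + r + s := by
  have hdeg :
      (leftWeightPoly a b n r s τ j).natDegree ≤ 0 + j * 1 + (r - j - 1 + (s + 2 * n)) :=
    natDegree_mul_le_of_le
      (natDegree_mul_le_of_le (natDegree_C _).le
        (natDegree_pow_le_of_le j (natDegree_X_sub_C_le a)))
      (natDegree_mul_le_of_le (natDegree_taylorPoly_le _ a (r - j - 1)) natDegree_omegaPoly_le)
  omega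

theorem X_sub_C_pow_dvd_leftWeightPoly_sub (hab : a < b) (hτ : ∀ k < n, τ k ∈ Set.Ioo a b)
    {j : ℕ} (hj : j < r) :
    (X - C a) ^ r ∣ leftWeightPoly a b n r s τ j - C (j.factorial : ℝ)⁻¹ * (X - C a) ^ j := by
  have h := X_sub_C_pow_dvd_taylorPoly_inv_mul_sub_one (omegaPoly b n s τ)
    (omegaPoly_eval_pos hab hτ).ne' (r - j - 1)
  have hr : (X - C a) ^ r = (X - C a) ^ j * (X - C a) ^ (r - j - 1 + 1) := by
    rw [← pow_add]; congr 1; omega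
  rw [hr]
  convert mul_dvd_mul (dvd_mul_left ((X - C a) ^ j) (C (j.factorial : ℝ)⁻¹)) h using 1
  rw [leftWeightPoly]
  ring

theorem eval_iterate_derivative_leftWeightPoly_left (hab : a < b)
    (hτ : ∀ k < n, τ k ∈ Set.Ioo a b) {i j : ℕ} (hi : i < r) (hj : j < r) :
    (derivative^[i] (leftWeightPoly a b n r s τ j)).eval a = if i = j then 1 else 0 := by
  have h := eval_iterate_derivative_eq_zero_of_pow_dvd
    (X_sub_C_pow_dvd_leftWeightPoly_sub (s := s) hab hτ hj) hi
  rw [iterate_derivative_sub, eval_sub, sub_eq_zero, iterate_derivative_C_mul, eval_mul, eval_C,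
    eval_self_iterate_derivative_X_sub_C_pow] at h
  rw [h]
  split_ifs
  · exact inv_mul_cancel₀ (Nat.cast_ne_zero.mpr j.factorial_ne_zero)
  · exact mul_zero _

theorem leftWeightPoly_eval_node (j : ℕ) {k : ℕ} (hk : k < n) :
    (leftWeightPoly a b n r s τ j).eval (τ k) = 0 := by
  simp [leftWeightPoly, omegaPoly_eval_node hk]

theorem eval_iterate_derivative_leftWeightPoly_right (j : ℕ) {i : ℕ} (hi : i < s) :
    (derivative^[i] (leftWeightPoly a b n r s τ j)).eval b = 0 :=
  eval_iterate_derivative_eq_zero_of_pow_dvd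
    ((X_sub_C_pow_dvd_omegaPoly.mul_left _).mul_left _) hi

theorem quad_eval_eq_left_weight (hab : a < b) {w0 wi w1 : ℕ → ℝ} {p : ℝ[X]} {j : ℕ}
    (hj : j < r)
    (hleft : ∀ i < r, (derivative^[i] p).eval a = if i = j then 1 else 0)
    (hnode : ∀ k < n, p.eval (τ k) = 0)
    (hright : ∀ i < s, (derivative^[i] p).eval b = 0) :
    quad a b n r s τ w0 wi w1 (fun t => p.eval t) = w0 j := by
  have hIcc := uniqueDiffOn_Icc hab
  have ha := Set.left_mem_Icc.mpr hab.le
  have hb := Set.right_mem_Icc.mpr hab.le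
  have hsum_left : ∑ i ∈ Finset.range r,
      w0 i * iteratedDerivWithin i (fun t => p.eval t) (Set.Icc a b) a = w0 j := by
    rw [Finset.sum_eq_single_of_mem j (Finset.mem_range.mpr hj)]
    · rw [p.iteratedDerivWithin_eval hIcc ha, hleft j hj, if_pos rfl, mul_one]
    · intro i hi hij
      rw [p.iteratedDerivWithin_eval hIcc ha, hleft i (Finset.mem_range.mp hi), if_neg hij,
        mul_zero]
  have hsum_node : ∑ k ∈ Finset.range n, wi k * p.eval (τ k) = 0 :=
    Finset.sum_eq_zero fun k hk => by rw [hnode k (Finset.mem_range.mp hk), mul_zero]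
  have hsum_right : ∑ i ∈ Finset.range s,
      (-1 : ℝ) ^ i * w1 i * iteratedDerivWithin i (fun t => p.eval t) (Set.Icc a b) b = 0 :=
    Finset.sum_eq_zero fun i hi => by
      rw [p.iteratedDerivWithin_eval hIcc hb, hright i (Finset.mem_range.mp hi), mul_zero]
  rw [quad, hsum_left, hsum_node, hsum_right, add_zero, add_zero]

end GaussRadauLobatto

theorem left_weight_integral_formula_general
    (a b : ℝ) (hab : a < b)
    (μ : Measure ℝ)
    (n r s : ℕ) (hr : 1 ≤ r)
    (τ w0 wi w1 : ℕ → ℝ)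
    (hτab : ∀ k < n, τ k ∈ Set.Ioo a b)
    (hex : ∀ p : Polynomial ℝ, p.natDegree + 1 ≤ 2 * n + r + s →
      quad a b n r s τ w0 wi w1 (fun t => p.eval t) = ∫ t, p.eval t ∂μ)
    (j : ℕ) (hj : j ≤ r - 1) :
    w0 j = ∫ t, PaFun a b n r s τ j t ∂μ := by
  have hjr : j < r := by omega
  set P := leftWeightPoly a b n r s τ j
  calc w0 j = quad a b n r s τ w0 wi w1 (fun t => P.eval t) :=
        (quad_eval_eq_left_weight hab hjr
          (fun i hi => eval_iterate_derivative_leftWeightPoly_left hab hτab hi hjr)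
          (fun k hk => leftWeightPoly_eval_node j hk)
          (fun i hi => eval_iterate_derivative_leftWeightPoly_right j hi)).symm
    _ = ∫ t, P.eval t ∂μ := hex P (natDegree_leftWeightPoly_lt hjr)
    _ = ∫ t, PaFun a b n r s τ j t ∂μ := by simp_rw [P, leftWeightPoly_eval]

/-- under the exactness assumption,
`λ₀^{(j)} = ∫ P_{n,r,s,a,j}(t) dλ(t)` for `0 ≤ j ≤ r-1`. -/
theorem left_weight_integral_formula
    (a b : ℝ) (hab : a < b)
    (μ : Measure ℝ) [IsFiniteMeasure μ]
    (hsupp : μ (Set.Icc a b)ᶜ = 0)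
    (hinf : {x | x ∈ Set.Ioo a b ∧ ∀ ε > 0, 0 < μ (Set.Ioo (x - ε) (x + ε))}.Infinite)
    (n r s : ℕ) (hr : 1 ≤ r)
    (τ w0 wi w1 : ℕ → ℝ)
    (hτab : ∀ k < n, τ k ∈ Set.Ioo a b)
    (hτmono : ∀ i k, i < k → k < n → τ i < τ k)
    (hex : ∀ p : Polynomial ℝ, p.natDegree + 1 ≤ 2 * n + r + s →
      quad a b n r s τ w0 wi w1 (fun t => p.eval t) = ∫ t, p.eval t ∂μ)
    (j : ℕ) (hj : j ≤ r - 1) :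
    w0 j = ∫ t, PaFun a b n r s τ j t ∂μ :=
  left_weight_integral_formula_general a b hab μ n r s hr τ w0 wi w1 hτab hex j hj
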